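/- If κ₁ < γ ≤ 3κ₁, then the direction ⃗ψ_ω = (0, κ₁^{-1/2}φ_ω) satisfies (⃗ψ_ω,⃗φ_ω)_H = (⃗ψ_ω, i⃗φ_ω)_H = 0 and ⟨S_ω''(⃗φ_ω)⃗ψ_ω, ⃗ψ_ω⟩ = κ₁^{-1}⟨L_{γ/κ₁}φ_ω, φ_ω⟩ < 0. -/

import Mathlib

open MeasureTheory Real Asymptotics

/-- The soliton profile `φ_ω(x) = √(2ω) sech(√ω x)`, with `sech y = 1 / cosh y`. -/
noncomputable def phiW (ω x : ℝ) : ℝ :=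
  Real.sqrt (2 * ω) * (1 / Real.cosh (Real.sqrt ω * x))

/-- The linearized operator `L_a u = -u'' + ω u - a φ_ω² u`. -/
noncomputable def Lop (ω a : ℝ) (u : ℝ → ℝ) (x : ℝ) : ℝ :=
  -(deriv (deriv u) x) + ω * u x - a * (phiW ω x) ^ 2 * u x

/-- The quadratic form `⟨L_a u, u⟩ = ∫ (|u'|² + ω u² - a φ_ω² u²)`. -/
noncomputable def QLa (ω a : ℝ) (u : ℝ → ℝ) : ℝ :=
  ∫ x : ℝ, ((deriv u x) ^ 2 + ω * (u x) ^ 2 - a * (phiW ω x) ^ 2 * (u x) ^ 2)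

/-- Pairs of complex-valued functions on ℝ. -/
abbrev Pair := (ℝ → ℂ) × (ℝ → ℂ)

/-- The energy functional `E`. -/
noncomputable def En (κ₁ κ₂ γ : ℝ) (u : Pair) : ℝ :=
  ((1 / 2) * ∫ x : ℝ, ‖deriv u.1 x‖ ^ 2) - ((κ₁ / 4) * ∫ x : ℝ, ‖u.1 x‖ ^ 4)
  + ((1 / 2) * ∫ x : ℝ, ‖deriv u.2 x‖ ^ 2) - ((κ₂ / 4) * ∫ x : ℝ, ‖u.2 x‖ ^ 4)
  - (γ / 2) * (∫ x : ℝ, (u.1 x) ^ 2 * (starRingEnd ℂ (u.2 x)) ^ 2).re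

/-- The charge functional `Q`. -/
noncomputable def Qm (u : Pair) : ℝ :=
  (1 / 2) * ((∫ x : ℝ, ‖u.1 x‖ ^ 2) + ∫ x : ℝ, ‖u.2 x‖ ^ 2)

/-- The action `S_ω = E + ω Q`. -/
noncomputable def Sfun (κ₁ κ₂ γ ω : ℝ) (u : Pair) : ℝ :=
  En κ₁ κ₂ γ u + ω * Qm u

/-- The semitrivial profile `⃗φ_ω = (κ₁^{-1/2} φ_ω, 0)`. -/
noncomputable def phivec (κ₁ ω : ℝ) : Pair :=
  (fun x => ((phiW ω x / Real.sqrt κ₁ : ℝ) : ℂ), fun _ => 0)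

/-- The profile `⃗ψ_ω = (0, κ₁^{-1/2} φ_ω)`. -/
noncomputable def psivec (κ₁ ω : ℝ) : Pair :=
  (fun _ => 0, fun x => ((phiW ω x / Real.sqrt κ₁ : ℝ) : ℂ))

/-- Real `L²`-inner product on pairs: `(⃗u,⃗v)_H = Σ_j Re ∫ u_j \bar v_j`. -/
noncomputable def Hinner (u v : Pair) : ℝ :=
  (∫ x : ℝ, (u.1 x) * (starRingEnd ℂ (v.1 x))).re
  + (∫ x : ℝ, (u.2 x) * (starRingEnd ℂ (v.2 x))).re

/-- Multiplication of a pair by `i`. -/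
noncomputable def Ivec (u : Pair) : Pair :=
  (fun x => Complex.I * u.1 x, fun x => Complex.I * u.2 x)

/-- Squared `X = H¹(ℝ,ℂ)²` norm. -/
noncomputable def XnormSq (u : Pair) : ℝ :=
  (∫ x : ℝ, ‖u.1 x‖ ^ 2) + (∫ x : ℝ, ‖deriv u.1 x‖ ^ 2)
  + (∫ x : ℝ, ‖u.2 x‖ ^ 2) + (∫ x : ℝ, ‖deriv u.2 x‖ ^ 2)

/-- Squared `H¹(ℝ,ℝ)` norm. -/
noncomputable def H1normSq (v : ℝ → ℝ) : ℝ :=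
  (∫ x : ℝ, (v x) ^ 2) + (∫ x : ℝ, (deriv v x) ^ 2)

/-- Membership in `H¹(ℝ,ℝ)`. -/
noncomputable def InH1r (v : ℝ → ℝ) : Prop :=
  Differentiable ℝ v ∧ MemLp v 2 (volume : Measure ℝ) ∧
    MemLp (deriv v) 2 (volume : Measure ℝ)

/-- Membership in `H¹(ℝ,ℂ)`. -/
noncomputable def InH1c (v : ℝ → ℂ) : Prop :=
  Differentiable ℝ v ∧ MemLp v 2 (volume : Measure ℝ) ∧
    MemLp (deriv v) 2 (volume : Measure ℝ)

/-- Membership of a pair in `X = H¹(ℝ,ℂ)²` with even symmetry. -/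
noncomputable def InXeven (u : Pair) : Prop :=
  InH1c u.1 ∧ InH1c u.2 ∧ (∀ x, u.1 (-x) = u.1 x) ∧ (∀ x, u.2 (-x) = u.2 x)


/-!
Since `⃗φ_ω + t ⃗ψ_ω` has real components, `S_ω(⃗φ_ω + t ⃗ψ_ω)` is an even quartic polynomial in `t`
whose `t²`-coefficient is half of `∫ (ψ'² + ω ψ² - γ φ² ψ²)` with `φ = ψ = κ₁^{-1/2} φ_ω`, that is,
of `κ₁⁻¹ ⟨L_{γ/κ₁} φ_ω, φ_ω⟩`. The integrals of `sech²` and `sech⁴` (antiderivatives `tanh` and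
`tanh - tanh³/3`) give `∫ φ_ω'² + ω ∫ φ_ω² = ∫ φ_ω⁴`, i.e. `⟨L₁ φ_ω, φ_ω⟩ = 0`, hence
`⟨L_a φ_ω, φ_ω⟩ = (1 - a) ∫ φ_ω⁴`, which is negative for `a = γ/κ₁ > 1`.
-/

open Filter Topology

namespace Real

theorem hasDerivAt_tanh (x : ℝ) : HasDerivAt tanh (cosh x ^ 2)⁻¹ x := by
  have h := (hasDerivAt_sinh x).div (hasDerivAt_cosh x) (cosh_pos x).ne'
  rw [show tanh = sinh / cosh from funext tanh_eq_sinh_div_cosh]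
  refine h.congr_deriv ?_
  rw [← one_div, ← cosh_sq_sub_sinh_sq x]
  ring

theorem one_sub_tanh_sq (x : ℝ) : 1 - tanh x ^ 2 = (cosh x ^ 2)⁻¹ := by
  rw [tanh_eq_sinh_div_cosh, div_pow, sinh_sq]
  field_simp
  ring

theorem tendsto_tanh_atTop : Tendsto tanh atTop (𝓝 1) := by
  have hgap (x : ℝ) : 1 - tanh x = exp (-x) / cosh x := by
    rw [tanh_eq_sinh_div_cosh, ← cosh_sub_sinh]
    field_simp
  have hdecay : Tendsto (fun x => exp (-x) / cosh x) atTop (𝓝 0) :=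
    squeeze_zero (fun x => by positivity)
      (fun x => div_le_self (exp_pos _).le (one_le_cosh x))
      (tendsto_exp_atBot.comp tendsto_neg_atTop_atBot)
  simpa [← hgap] using (tendsto_const_nhds (x := (1 : ℝ))).sub hdecay

theorem tendsto_tanh_atBot : Tendsto tanh atBot (𝓝 (-1)) := by
  simpa [Function.comp_def, tanh_neg] using
    (tendsto_tanh_atTop.comp tendsto_neg_atBot_atTop).neg

theorem inv_cosh_sq_le_inv_one_add_sq (x : ℝ) : (cosh x ^ 2)⁻¹ ≤ (1 + x ^ 2)⁻¹ := by
  have hsinh : x ^ 2 ≤ sinh x ^ 2 := by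
    rw [← sq_abs, ← sq_abs (sinh x), abs_sinh]
    gcongr
    exact self_le_sinh_iff.mpr (abs_nonneg x)
  gcongr
  rw [cosh_sq']
  linarith

theorem integrable_inv_cosh_sq : Integrable fun x => (cosh x ^ 2)⁻¹ :=
  integrable_inv_one_add_sq.mono' (by fun_prop) (Eventually.of_forall fun x => by
    rw [norm_of_nonneg (by positivity)]
    exact inv_cosh_sq_le_inv_one_add_sq x)

theorem integrable_inv_cosh_pow_four : Integrable fun x => (cosh x ^ 4)⁻¹ :=
  integrable_inv_cosh_sq.mono' (by fun_prop) (Eventually.of_forall fun x => by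
    rw [norm_of_nonneg (by positivity)]
    gcongr
    · exact one_le_cosh x
    · norm_num)

theorem integral_inv_cosh_sq : ∫ x, (cosh x ^ 2)⁻¹ = 2 := by
  rw [integral_of_hasDerivAt_of_tendsto hasDerivAt_tanh integrable_inv_cosh_sq
    tendsto_tanh_atBot tendsto_tanh_atTop]
  norm_num

theorem integral_inv_cosh_pow_four : ∫ x, (cosh x ^ 4)⁻¹ = 4 / 3 := by
  have hderiv (x : ℝ) : HasDerivAt (fun x => tanh x - tanh x ^ 3 / 3) (cosh x ^ 4)⁻¹ x := by
    refine ((hasDerivAt_tanh x).sub (((hasDerivAt_tanh x).pow 3).div_const 3)).congr_deriv ?_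
    rw [show (cosh x ^ 4)⁻¹ = (cosh x ^ 2)⁻¹ ^ 2 by ring, ← one_sub_tanh_sq]
    ring
  rw [integral_of_hasDerivAt_of_tendsto hderiv integrable_inv_cosh_pow_four
    (tendsto_tanh_atBot.sub ((tendsto_tanh_atBot.pow 3).div_const 3))
    (tendsto_tanh_atTop.sub ((tendsto_tanh_atTop.pow 3).div_const 3))]
  norm_num

end Real

theorem integral_comp_mul_left_of_pos (g : ℝ → ℝ) {a : ℝ} (ha : 0 < a) :
    ∫ x, g (a * x) = (∫ y, g y) / a := by
  rw [Measure.integral_comp_mul_left, abs_of_pos (inv_pos.mpr ha), smul_eq_mul, inv_mul_eq_div]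

section Soliton

variable {ω : ℝ}

theorem phiW_sq (hω : 0 ≤ ω) (x : ℝ) : phiW ω x ^ 2 = 2 * ω * (cosh (√ω * x) ^ 2)⁻¹ := by
  rw [phiW, mul_pow, sq_sqrt (by positivity), one_div, inv_pow]

theorem phiW_pow_four (hω : 0 ≤ ω) (x : ℝ) :
    phiW ω x ^ 4 = 4 * ω ^ 2 * (cosh (√ω * x) ^ 4)⁻¹ := by
  rw [show phiW ω x ^ 4 = (phiW ω x ^ 2) ^ 2 by ring, phiW_sq hω]
  ring

theorem hasDerivAt_phiW (ω x : ℝ) :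
    HasDerivAt (phiW ω) (-(√(2 * ω) * √ω * sinh (√ω * x) / cosh (√ω * x) ^ 2)) x := by
  have h := (((hasDerivAt_id x).const_mul √ω).cosh.inv (cosh_pos _).ne').const_mul √(2 * ω)
  simp only [id, mul_one] at h
  refine (h.congr_deriv (by ring)).congr_of_eventuallyEq (Eventually.of_forall fun y => ?_)
  simp [phiW]

theorem deriv_phiW_sq (hω : 0 ≤ ω) (x : ℝ) :
    deriv (phiW ω) x ^ 2 = 2 * ω ^ 2 * ((cosh (√ω * x) ^ 2)⁻¹ - (cosh (√ω * x) ^ 4)⁻¹) := by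
  rw [(hasDerivAt_phiW ω x).deriv, neg_sq, div_pow, mul_pow, mul_pow, sq_sqrt (by positivity),
    sq_sqrt hω, sinh_sq]
  have := (cosh_pos (√ω * x)).ne'
  field_simp

theorem integrable_phiW_sq (hω : 0 < ω) : Integrable fun x => phiW ω x ^ 2 := by
  simp_rw [phiW_sq hω.le]
  exact (integrable_inv_cosh_sq.comp_mul_left' (sqrt_pos.mpr hω).ne').const_mul _

theorem integrable_phiW_pow_four (hω : 0 < ω) : Integrable fun x => phiW ω x ^ 4 := by
  simp_rw [phiW_pow_four hω.le]
  exact (integrable_inv_cosh_pow_four.comp_mul_left' (sqrt_pos.mpr hω).ne').const_mul _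

theorem integrable_deriv_phiW_sq (hω : 0 < ω) : Integrable fun x => deriv (phiW ω) x ^ 2 := by
  simp_rw [deriv_phiW_sq hω.le]
  exact ((integrable_inv_cosh_sq.comp_mul_left' (sqrt_pos.mpr hω).ne').sub
    (integrable_inv_cosh_pow_four.comp_mul_left' (sqrt_pos.mpr hω).ne')).const_mul _

theorem integral_phiW_sq (hω : 0 < ω) : ∫ x, phiW ω x ^ 2 = 4 * √ω := by
  simp_rw [phiW_sq hω.le]
  rw [integral_const_mul, integral_comp_mul_left_of_pos (fun y => (cosh y ^ 2)⁻¹)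
    (sqrt_pos.mpr hω), integral_inv_cosh_sq]
  have := (sqrt_pos.mpr hω).ne'
  field_simp
  rw [sq_sqrt hω.le]
  ring

theorem integral_phiW_pow_four (hω : 0 < ω) : ∫ x, phiW ω x ^ 4 = 16 / 3 * ω * √ω := by
  simp_rw [phiW_pow_four hω.le]
  rw [integral_const_mul, integral_comp_mul_left_of_pos (fun y => (cosh y ^ 4)⁻¹)
    (sqrt_pos.mpr hω), integral_inv_cosh_pow_four]
  have := (sqrt_pos.mpr hω).ne'
  field_simp
  rw [sq_sqrt hω.le]
  ring

theorem integral_deriv_phiW_sq (hω : 0 < ω) :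
    ∫ x, deriv (phiW ω) x ^ 2 = 4 / 3 * ω * √ω := by
  simp_rw [deriv_phiW_sq hω.le]
  rw [integral_const_mul, integral_sub (integrable_inv_cosh_sq.comp_mul_left' (sqrt_pos.mpr hω).ne')
    (integrable_inv_cosh_pow_four.comp_mul_left' (sqrt_pos.mpr hω).ne'),
    integral_comp_mul_left_of_pos (fun y => (cosh y ^ 2)⁻¹) (sqrt_pos.mpr hω),
    integral_comp_mul_left_of_pos (fun y => (cosh y ^ 4)⁻¹) (sqrt_pos.mpr hω),
    integral_inv_cosh_sq, integral_inv_cosh_pow_four]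
  have := (sqrt_pos.mpr hω).ne'
  field_simp
  rw [sq_sqrt hω.le]
  ring

theorem integral_phiW_pow_four_pos (hω : 0 < ω) : 0 < ∫ x, phiW ω x ^ 4 := by
  rw [integral_phiW_pow_four hω]
  have := sqrt_pos.mpr hω
  positivity

theorem QLa_phiW_eq_sub (hω : 0 < ω) (a : ℝ) :
    QLa ω a (phiW ω) = (∫ x, deriv (phiW ω) x ^ 2) + ω * (∫ x, phiW ω x ^ 2)
      - a * ∫ x, phiW ω x ^ 4 := by
  rw [QLa, ← integral_const_mul, ← integral_const_mul, ← integral_add, ← integral_sub]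
  · congr 1 with x; ring
  · exact (integrable_deriv_phiW_sq hω).add ((integrable_phiW_sq hω).const_mul ω)
  · exact (integrable_phiW_pow_four hω).const_mul a
  · exact integrable_deriv_phiW_sq hω
  · exact (integrable_phiW_sq hω).const_mul ω

theorem QLa_phiW (hω : 0 < ω) (a : ℝ) : QLa ω a (phiW ω) = (1 - a) * ∫ x, phiW ω x ^ 4 := by
  rw [QLa_phiW_eq_sub hω, integral_deriv_phiW_sq hω, integral_phiW_sq hω,
    integral_phiW_pow_four hω]
  ring

end Soliton

theorem iteratedDeriv_two_quartic (a b c : ℝ) :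
    iteratedDeriv 2 (fun t : ℝ => a + b * t ^ 2 + c * t ^ 4) 0 = 2 * b := by
  have h1 (t : ℝ) : HasDerivAt (fun t : ℝ => a + b * t ^ 2 + c * t ^ 4)
      (2 * b * t + 4 * c * t ^ 3) t := by
    refine ((((hasDerivAt_pow 2 t).const_mul b).const_add a).add
      ((hasDerivAt_pow 4 t).const_mul c)).congr_deriv ?_
    push_cast
    ring
  have h2 : HasDerivAt (fun t : ℝ => 2 * b * t + 4 * c * t ^ 3) (2 * b) 0 := by
    refine (((hasDerivAt_id (0 : ℝ)).const_mul (2 * b)).add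
      ((hasDerivAt_pow 3 (0 : ℝ)).const_mul (4 * c))).congr_deriv ?_
    simp
  rw [iteratedDeriv_succ, iteratedDeriv_one, funext fun t => (h1 t).deriv, h2.deriv]

theorem Sfun_semitrivial_add_smul (κ₁ κ₂ γ ω : ℝ) (f : ℝ → ℝ) {g : ℝ → ℝ}
    (hg : Differentiable ℝ g) (t : ℝ) :
    Sfun κ₁ κ₂ γ ω ((fun x => (f x : ℂ), fun _ => 0) + t • (fun _ => 0, fun x => (g x : ℂ)))
      = Sfun κ₁ κ₂ γ ω (fun x => (f x : ℂ), fun _ => 0)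
        + ((∫ x, deriv g x ^ 2) + ω * (∫ x, g x ^ 2) - γ * ∫ x, f x ^ 2 * g x ^ 2) / 2 * t ^ 2
        + (-(κ₂ / 4) * ∫ x, g x ^ 4) * t ^ 4 := by
  have hsum : ((fun x => (f x : ℂ), fun _ => 0) + t • (fun _ => 0, fun x => (g x : ℂ)) : Pair)
      = (fun x => (f x : ℂ), fun x => ((t * g x : ℝ) : ℂ)) := by
    ext x <;> simp
  have hderiv (x : ℝ) : deriv (fun x => ((t * g x : ℝ) : ℂ)) x = ((t * deriv g x : ℝ) : ℂ) :=
    ((hg x).hasDerivAt.const_mul t).ofReal_comp.deriv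
  have hcross (x : ℝ) : (f x : ℂ) ^ 2 * starRingEnd ℂ ((t * g x : ℝ) : ℂ) ^ 2
      = ((t ^ 2 * (f x ^ 2 * g x ^ 2) : ℝ) : ℂ) := by
    rw [Complex.conj_ofReal]; push_cast; ring
  have hfour : Even 4 := by decide
  rw [hsum]
  simp only [Sfun, En, Qm, hderiv, hcross, Complex.norm_real, norm_mul, Real.norm_eq_abs, mul_pow,
    sq_abs, hfour.pow_abs, integral_complex_ofReal, Complex.ofReal_re, integral_const_mul,
    deriv_const', norm_zero, map_zero, integral_zero, mul_zero, zero_pow two_ne_zero,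
    zero_pow four_ne_zero, Complex.zero_re]
  ring

theorem iteratedDeriv_two_Sfun_semitrivial_add_smul (κ₁ κ₂ γ ω : ℝ) (f : ℝ → ℝ) {g : ℝ → ℝ}
    (hg : Differentiable ℝ g) :
    iteratedDeriv 2 (fun t : ℝ => Sfun κ₁ κ₂ γ ω
      ((fun x => (f x : ℂ), fun _ => 0) + t • (fun _ => 0, fun x => (g x : ℂ)))) 0
      = (∫ x, deriv g x ^ 2) + ω * (∫ x, g x ^ 2) - γ * ∫ x, f x ^ 2 * g x ^ 2 := by
  rw [funext (Sfun_semitrivial_add_smul κ₁ κ₂ γ ω f hg), iteratedDeriv_two_quartic]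
  ring

theorem iteratedDeriv_two_Sfun_phivec_add_smul_psivec (κ₁ κ₂ γ : ℝ) {ω : ℝ} (hκ₁ : 0 < κ₁)
    (hω : 0 < ω) :
    iteratedDeriv 2 (fun t : ℝ => Sfun κ₁ κ₂ γ ω (phivec κ₁ ω + t • psivec κ₁ ω)) 0
      = (1 / κ₁) * QLa ω (γ / κ₁) (phiW ω) := by
  have hdiff : Differentiable ℝ fun x => phiW ω x / √κ₁ :=
    fun x => ((hasDerivAt_phiW ω x).div_const _).differentiableAt
  have hquartic (x : ℝ) : phiW ω x ^ 2 / κ₁ * (phiW ω x ^ 2 / κ₁) = phiW ω x ^ 4 / κ₁ ^ 2 := by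
    ring
  rw [phivec, psivec, iteratedDeriv_two_Sfun_semitrivial_add_smul κ₁ κ₂ γ ω _ hdiff,
    QLa_phiW_eq_sub hω]
  simp only [deriv_div_const, div_pow, sq_sqrt hκ₁.le, hquartic, integral_div]
  field_simp

theorem negative_direction_general (κ₁ κ₂ γ ω : ℝ)
    (hκ₁ : 0 < κ₁) (hγ : κ₁ < γ) (hω : 0 < ω) :
    Hinner (psivec κ₁ ω) (phivec κ₁ ω) = 0 ∧
    Hinner (psivec κ₁ ω) (Ivec (phivec κ₁ ω)) = 0 ∧
    iteratedDeriv 2 (fun t : ℝ => Sfun κ₁ κ₂ γ ω (phivec κ₁ ω + t • psivec κ₁ ω)) 0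
      = (1 / κ₁) * QLa ω (γ / κ₁) (phiW ω) ∧
    iteratedDeriv 2 (fun t : ℝ => Sfun κ₁ κ₂ γ ω (phivec κ₁ ω + t • psivec κ₁ ω)) 0
      < 0 := by
  have hsecond := iteratedDeriv_two_Sfun_phivec_add_smul_psivec κ₁ κ₂ γ hκ₁ hω
  have hcoupling : 1 < γ / κ₁ := (one_lt_div hκ₁).mpr hγ
  refine ⟨by simp [Hinner, psivec, phivec], by simp [Hinner, psivec, phivec, Ivec], hsecond, ?_⟩
  rw [hsecond, QLa_phiW hω]
  exact mul_neg_of_pos_of_neg (by positivity)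
    (mul_neg_of_neg_of_pos (by linarith) (integral_phiW_pow_four_pos hω))

/-- for `κ₁ < γ ≤ 3κ₁`, the direction `⃗ψ_ω = (0,κ₁^{-1/2}φ_ω)`
satisfies `(⃗ψ_ω,⃗φ_ω)_H = (⃗ψ_ω,i⃗φ_ω)_H = 0` and
`⟨S_ω''(⃗φ_ω)⃗ψ_ω,⃗ψ_ω⟩ = κ₁^{-1}⟨L_{γ/κ₁}φ_ω,φ_ω⟩ < 0`. -/
theorem negative_direction (κ₁ κ₂ γ ω : ℝ)
    (hκ₁ : 0 < κ₁) (hκ₂ : 0 < κ₂) (hγ : κ₁ < γ) (hγ3 : γ ≤ 3 * κ₁) (hω : 0 < ω) :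
    Hinner (psivec κ₁ ω) (phivec κ₁ ω) = 0 ∧
    Hinner (psivec κ₁ ω) (Ivec (phivec κ₁ ω)) = 0 ∧
    iteratedDeriv 2 (fun t : ℝ => Sfun κ₁ κ₂ γ ω (phivec κ₁ ω + t • psivec κ₁ ω)) 0
      = (1 / κ₁) * QLa ω (γ / κ₁) (phiW ω) ∧
    iteratedDeriv 2 (fun t : ℝ => Sfun κ₁ κ₂ γ ω (phivec κ₁ ω + t • psivec κ₁ ω)) 0
      < 0 :=
  negative_direction_general κ₁ κ₂ γ ω hκ₁ hγ hω
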